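/- arXiv:1804.10447 — 3 statements merged into one kernel-verified Lean document; each statement's English description precedes it below -/
import Mathlib

section
/- Let x₁, x₂, x₃, x₁₂, x₁₃, x₂₃, x₁₂₃ be real numbers. There exists a probability measure P on the finite sample space {0,1}³ (with all subsets measurable) such that, writing Eᵢ := {ω ∈ {0,1}³ : ωᵢ = 1}, one has P(Eᵢ) = xᵢ for i = 1,2,3, P(Eᵢ ∩ Eⱼ) = x_{ij} for 1 ≤ i < j ≤ 3, and P(E₁ ∩ E₂ ∩ E₃) = x₁₂₃, if and only if all of the following hold: 0 ≤ xᵢ ≤ 1 for i = 1,2,3; max{x₁+x₂−1, x₁₃+x₂₃−x₃, 0} ≤ x₁₂ ≤ min{x₁, x₂}; max{x₁+x₃−1, x₁₂+x₂₃−x₂, 0} ≤ x₁₃ ≤ min{x₁, x₃}; max{x₂+x₃−1, x₁₂+x₁₃−x₁, 0} ≤ x₂₃ ≤ min{x₂, x₃}; 1−x₁−x₂−x₃+x₁₂+x₁₃+x₂₃ ≥ 0; max{0, x₁₂+x₁₃−x₁, x₁₂+x₂₃−x₂, x₁₃+x₂₃−x₃} ≤ x₁₂₃ ≤ min{x₁₂,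 x₁₃, x₂₃, 1−x₁−x₂−x₃+x₁₂+x₁₃+x₂₃}. -/
/-!
A measure on the eight-point space `{0,1}³` is the same thing as its eight atom masses. The seven
prescribed values together with the total mass `1` determine these masses by inclusion–exclusion,
so a realizing probability measure exists if and only if the eight inclusion–exclusion
expressions are nonnegative. The listed system of inequalities is equivalent to those eight
inequalities by linear arithmetic.
-/

open MeasureTheory

theorem Fin.sum_univ_fun_three_bool {M : Type*} [AddCommMonoid M] (f : (Fin 3 → Bool) → M) :
    ∑ ω, f ω = f ![true, true, true] + f ![true, true, false] + f ![true, false, true] +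
      f ![true, false, false] + f ![false, true, true] + f ![false, true, false] +
      f ![false, false, true] + f ![false, false, false] := by
  simp only [← (Fin.consEquiv fun _ => Bool).sum_comp, Fintype.sum_prod_type, Fintype.sum_bool,
    Fintype.sum_unique, Fin.consEquiv, Equiv.coe_fn_mk, add_assoc]
  rfl

theorem Fin.forall_fun_three_bool {p : (Fin 3 → Bool) → Prop} :
    (∀ ω, p ω) ↔ p ![true, true, true] ∧ p ![true, true, false] ∧ p ![true, false, true] ∧
      p ![true, false, false] ∧ p ![false, true, true] ∧ p ![false, true, false] ∧
      p ![false, false, true] ∧ p ![false, false, false] := by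
  simp only [← (Fin.consEquiv fun _ => Bool).forall_congr_right, Prod.forall,
    Bool.forall_bool' true, Bool.not_true, Unique.forall_iff, Fin.consEquiv, Equiv.coe_fn_mk,
    and_assoc]
  rfl

theorem MeasureTheory.measureReal_setOf_eq_sum {α : Type*} [Fintype α] [MeasurableSpace α]
    [MeasurableSingletonClass α] (P : Measure α) [IsFiniteMeasure P] (q : α → Prop)
    [DecidablePred q] :
    P.real {ω | q ω} = ∑ ω, if q ω then P.real {ω} else 0 := by
  rw [← Finset.sum_filter, sum_measureReal_singleton, Finset.coe_filter_univ]

section Assessment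

variable (x₁ x₂ x₃ x₁₂ x₁₃ x₂₃ x₁₂₃ : ℝ)

def Realizes (P : Measure (Fin 3 → Bool)) : Prop :=
  P.real {ω | ω 0 = true} = x₁ ∧ P.real {ω | ω 1 = true} = x₂ ∧ P.real {ω | ω 2 = true} = x₃ ∧
    P.real ({ω | ω 0 = true} ∩ {ω | ω 1 = true}) = x₁₂ ∧
    P.real ({ω | ω 0 = true} ∩ {ω | ω 2 = true}) = x₁₃ ∧
    P.real ({ω | ω 1 = true} ∩ {ω | ω 2 = true}) = x₂₃ ∧
    P.real ({ω | ω 0 = true} ∩ {ω | ω 1 = true} ∩ {ω | ω 2 = true}) = x₁₂₃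

/-- Inclusion–exclusion: the atom where exactly the events `Eᵢ, i ∈ A` occur gets
`∑_{B ⊇ A} (-1)^{|B \ A|} x_B`, with `x_∅ = 1`. -/
def atomWeight (ω : Fin 3 → Bool) : ℝ :=
  cond (ω 0)
    (cond (ω 1) (cond (ω 2) x₁₂₃ (x₁₂ - x₁₂₃)) (cond (ω 2) (x₁₃ - x₁₂₃) (x₁ - x₁₂ - x₁₃ + x₁₂₃)))
    (cond (ω 1) (cond (ω 2) (x₂₃ - x₁₂₃) (x₂ - x₁₂ - x₂₃ + x₁₂₃))
      (cond (ω 2) (x₃ - x₁₃ - x₂₃ + x₁₂₃) (1 - x₁ - x₂ - x₃ + x₁₂ + x₁₃ + x₂₃ - x₁₂₃)))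

variable {x₁ x₂ x₃ x₁₂ x₁₃ x₂₃ x₁₂₃}

theorem sum_atomWeight : ∑ ω, atomWeight x₁ x₂ x₃ x₁₂ x₁₃ x₂₃ x₁₂₃ ω = 1 := by
  simp only [Fin.sum_univ_fun_three_bool, atomWeight, Matrix.cons_val, cond_true, cond_false]
  ring

theorem atomWeight_nonneg_iff :
    (∀ ω, 0 ≤ atomWeight x₁ x₂ x₃ x₁₂ x₁₃ x₂₃ x₁₂₃ ω) ↔
      0 ≤ x₁₂₃ ∧ x₁₂₃ ≤ x₁₂ ∧ x₁₂₃ ≤ x₁₃ ∧ x₁₂ + x₁₃ - x₁ ≤ x₁₂₃ ∧ x₁₂₃ ≤ x₂₃ ∧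
        x₁₂ + x₂₃ - x₂ ≤ x₁₂₃ ∧ x₁₃ + x₂₃ - x₃ ≤ x₁₂₃ ∧
        x₁₂₃ ≤ 1 - x₁ - x₂ - x₃ + x₁₂ + x₁₃ + x₂₃ := by
  simp only [Fin.forall_fun_three_bool, atomWeight, Matrix.cons_val, cond_true, cond_false,
    sub_nonneg]
  constructor <;> rintro ⟨h₁, h₂, h₃, h₄, h₅, h₆, h₇, h₈⟩ <;> refine ⟨?_, ?_, ?_, ?_, ?_, ?_, ?_, ?_⟩ <;>
    linarith

theorem realizes_iff_measureReal_singleton_eq (P : Measure (Fin 3 → Bool))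
    [IsProbabilityMeasure P] :
    Realizes x₁ x₂ x₃ x₁₂ x₁₃ x₂₃ x₁₂₃ P ↔
      ∀ ω, P.real {ω} = atomWeight x₁ x₂ x₃ x₁₂ x₁₃ x₂₃ x₁₂₃ ω := by
  have hΩ : ∑ ω, P.real {ω} = 1 := by
    rw [sum_measureReal_singleton, Finset.coe_univ, probReal_univ]
  rw [Fin.sum_univ_fun_three_bool] at hΩ
  simp only [Realizes, ← Set.ofPred_and, measureReal_setOf_eq_sum, Fin.sum_univ_fun_three_bool,
    Fin.forall_fun_three_bool, atomWeight, Matrix.cons_val, cond_true, cond_false, and_true,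
    and_false, Bool.false_eq_true, if_true, if_false, add_zero]
  constructor
  · rintro ⟨h₁, h₂, h₃, h₁₂, h₁₃, h₂₃, h₁₂₃⟩
    refine ⟨?_, ?_, ?_, ?_, ?_, ?_, ?_, ?_⟩ <;> linarith
  · rintro ⟨h₁, h₂, h₃, h₄, h₅, h₆, h₇, -⟩
    rw [h₁, h₂, h₃, h₄, h₅, h₆, h₇]
    refine ⟨?_, ?_, ?_, ?_, ?_, ?_, ?_⟩ <;> ring

theorem exists_realizes_iff_atomWeight_nonneg :
    (∃ P : Measure (Fin 3 → Bool), IsProbabilityMeasure P ∧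
      Realizes x₁ x₂ x₃ x₁₂ x₁₃ x₂₃ x₁₂₃ P) ↔
      ∀ ω, 0 ≤ atomWeight x₁ x₂ x₃ x₁₂ x₁₃ x₂₃ x₁₂₃ ω := by
  constructor
  · rintro ⟨P, _, hP⟩ ω
    rw [← (realizes_iff_measureReal_singleton_eq P).1 hP ω]
    exact measureReal_nonneg
  · intro hw
    have hmass : ∑ ω, ENNReal.ofReal (atomWeight x₁ x₂ x₃ x₁₂ x₁₃ x₂₃ x₁₂₃ ω) = 1 := by
      rw [← ENNReal.ofReal_sum_of_nonneg fun ω _ => hw ω, sum_atomWeight, ENNReal.ofReal_one]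
    let P := (PMF.ofFintype _ hmass).toMeasure
    refine ⟨P, inferInstance, (realizes_iff_measureReal_singleton_eq P).2 fun ω => ?_⟩
    rw [measureReal_def, PMF.toMeasure_apply_singleton _ _ (measurableSet_singleton ω),
      PMF.ofFintype_apply, ENNReal.toReal_ofReal (hw ω)]

end Assessment

/-- There exists a probability measure `P` on `{0,1}³` (all subsets
measurable) with `P(Eᵢ) = xᵢ`, `P(Eᵢ ∩ Eⱼ) = x_{ij}`, `P(E₁ ∩ E₂ ∩ E₃) = x₁₂₃`, where
`Eᵢ := {ω : ωᵢ = 1}`, if and only if the listed system of inequalities holds. -/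
theorem stmt5 (x₁ x₂ x₃ x₁₂ x₁₃ x₂₃ x₁₂₃ : ℝ) :
    (∃ P : Measure (Fin 3 → Bool), IsProbabilityMeasure P ∧
      (P {ω | ω 0 = true}).toReal = x₁ ∧
      (P {ω | ω 1 = true}).toReal = x₂ ∧
      (P {ω | ω 2 = true}).toReal = x₃ ∧
      (P ({ω | ω 0 = true} ∩ {ω | ω 1 = true})).toReal = x₁₂ ∧
      (P ({ω | ω 0 = true} ∩ {ω | ω 2 = true})).toReal = x₁₃ ∧
      (P ({ω | ω 1 = true} ∩ {ω | ω 2 = true})).toReal = x₂₃ ∧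
      (P ({ω | ω 0 = true} ∩ {ω | ω 1 = true} ∩ {ω | ω 2 = true})).toReal = x₁₂₃) ↔
    ((0 ≤ x₁ ∧ x₁ ≤ 1) ∧ (0 ≤ x₂ ∧ x₂ ≤ 1) ∧ (0 ≤ x₃ ∧ x₃ ≤ 1) ∧
      (max (max (x₁ + x₂ - 1) (x₁₃ + x₂₃ - x₃)) 0 ≤ x₁₂ ∧ x₁₂ ≤ min x₁ x₂) ∧
      (max (max (x₁ + x₃ - 1) (x₁₂ + x₂₃ - x₂)) 0 ≤ x₁₃ ∧ x₁₃ ≤ min x₁ x₃) ∧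
      (max (max (x₂ + x₃ - 1) (x₁₂ + x₁₃ - x₁)) 0 ≤ x₂₃ ∧ x₂₃ ≤ min x₂ x₃) ∧
      1 - x₁ - x₂ - x₃ + x₁₂ + x₁₃ + x₂₃ ≥ 0 ∧
      max (max (max 0 (x₁₂ + x₁₃ - x₁)) (x₁₂ + x₂₃ - x₂)) (x₁₃ + x₂₃ - x₃) ≤ x₁₂₃ ∧
      x₁₂₃ ≤ min (min (min x₁₂ x₁₃) x₂₃) (1 - x₁ - x₂ - x₃ + x₁₂ + x₁₃ + x₂₃)) := by
  refine exists_realizes_iff_atomWeight_nonneg.trans (atomWeight_nonneg_iff.trans ?_)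
  simp only [max_le_iff, le_min_iff, ge_iff_le]
  constructor
  · rintro ⟨h₁, h₂, h₃, h₄, h₅, h₆, h₇, h₈⟩
    refine ⟨⟨?_, ?_⟩, ⟨?_, ?_⟩, ⟨?_, ?_⟩, ⟨⟨⟨?_, ?_⟩, ?_⟩, ?_, ?_⟩, ⟨⟨⟨?_, ?_⟩, ?_⟩, ?_, ?_⟩,
      ⟨⟨⟨?_, ?_⟩, ?_⟩, ?_, ?_⟩, ?_, ⟨⟨⟨?_, ?_⟩, ?_⟩, ?_⟩, ⟨⟨?_, ?_⟩, ?_⟩, ?_⟩ <;> linarith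
  · rintro ⟨-, -, -, -, -, -, -, ⟨⟨⟨h₁, h₂⟩, h₃⟩, h₄⟩, ⟨⟨h₅, h₆⟩, h₇⟩, h₈⟩
    exact ⟨h₁, h₅, h₆, h₂, h₇, h₃, h₄, h₈⟩
end

section
/- Conjunctive cumulative transitivity (the Cut rule identity): let A, B, C be events with P(A ∩ B) > 0. Then the conjunction (C|A∩B) ∧ (B|A) — i.e., the two-conditional conjunction with (A₀,H₀) := (C, A∩B) and (B₀,K₀) := (B, A) — coincides pointwise on Ω with the conditional event (B∩C)|A, the random variable equal to 1 on A∩B∩C, to 0 on A∖(B∩C), and to P(B∩C|A) on Aᶜ; in particular its prevision equals P(B∩C|A). -/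
open MeasureTheory
open scoped Classical

/-- `P(E|H) := P(E∩H)/P(H)`. -/
noncomputable def condProb {Ω : Type*} [MeasurableSpace Ω] (P : Measure Ω)
    (E H : Set Ω) : ℝ :=
  (P (E ∩ H)).toReal / (P H).toReal

/-- The conditional event `E|H`: the random variable equal to `1` on `E∩H`, to `0` on
`H∖E`, and to `P(E|H)` on `Hᶜ`. -/
noncomputable def condEvent {Ω : Type*} [MeasurableSpace Ω] (P : Measure Ω)
    (E H : Set Ω) : Ω → ℝ := fun ω =>
  if ω ∈ E ∩ H then 1 else if ω ∈ H \ E then 0 else condProb P E H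

/-- The prevision `z := [P(A∩H∩B∩K) + x·P(Hᶜ∩B∩K) + y·P(A∩H∩Kᶜ)]/P(H∪K)` of the
conjunction `(A|H) ∧ (B|K)`, where `x := P(A|H)` and `y := P(B|K)`. -/
noncomputable def conjPrev {Ω : Type*} [MeasurableSpace Ω] (P : Measure Ω)
    (A H B K : Set Ω) : ℝ :=
  ((P (A ∩ H ∩ (B ∩ K))).toReal + condProb P A H * (P (Hᶜ ∩ (B ∩ K))).toReal +
      condProb P B K * (P (A ∩ H ∩ Kᶜ)).toReal) / (P (H ∪ K)).toReal

/-- The conjunction `(A|H) ∧ (B|K)`: the random variable equal to `1` on `A∩H∩B∩K`, to `0`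
on `(H∖A) ∪ (K∖B)`, to `x := P(A|H)` on `Hᶜ∩B∩K`, to `y := P(B|K)` on `A∩H∩Kᶜ`, and to
`z := [P(A∩H∩B∩K) + x·P(Hᶜ∩B∩K) + y·P(A∩H∩Kᶜ)]/P(H∪K)` on `Hᶜ∩Kᶜ`. -/
noncomputable def conj2 {Ω : Type*} [MeasurableSpace Ω] (P : Measure Ω)
    (A H B K : Set Ω) : Ω → ℝ := fun ω =>
  if ω ∈ A ∩ H ∩ (B ∩ K) then 1
  else if ω ∈ (H \ A) ∪ (K \ B) then 0
  else if ω ∈ Hᶜ ∩ (B ∩ K) then condProb P A H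
  else if ω ∈ A ∩ H ∩ Kᶜ then condProb P B K
  else conjPrev P A H B K

/-!
When the first conditioning event is `H = B ∩ K`, the atoms `Hᶜ ∩ B ∩ K` and `A ∩ H ∩ Kᶜ` of
the conjunction `(A|H) ∧ (B|K)` are empty and `H ∪ K = K`, so both the prevision and the
pointwise values collapse to those of the conditional event `(B ∩ A)|K`.
-/

section Cut

variable {Ω : Type*} [MeasurableSpace Ω] (P : Measure Ω) (A B K : Set Ω)

theorem conjPrev_inter_eq_condProb :
    conjPrev P A (B ∩ K) B K = condProb P (B ∩ A) K := by
  have hmeet : A ∩ (B ∩ K) ∩ (B ∩ K) = B ∩ A ∩ K := by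
    ext; simp only [Set.mem_inter_iff]; tauto
  have hunion : B ∩ K ∪ K = K := Set.union_eq_right.mpr Set.inter_subset_right
  simp [conjPrev, condProb, hmeet, hunion, Set.inter_assoc]

theorem conj2_inter_eq_condEvent (ω : Ω) :
    conj2 P A (B ∩ K) B K ω = condEvent P (B ∩ A) K ω := by
  by_cases hK : ω ∈ K <;> by_cases hB : ω ∈ B <;> by_cases hA : ω ∈ A <;>
    simp [conj2, condEvent, hK, hB, hA, conjPrev_inter_eq_condProb]

end Cut

theorem stmt17_general {Ω : Type*} [MeasurableSpace Ω] (P : Measure Ω)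
    (A B C : Set Ω) :
    (∀ ω : Ω, conj2 P C (A ∩ B) B A ω = condEvent P (B ∩ C) A ω) ∧
      conjPrev P C (A ∩ B) B A = condProb P (B ∩ C) A := by
  rw [Set.inter_comm A B]
  exact ⟨conj2_inter_eq_condEvent P C B A, conjPrev_inter_eq_condProb P C B A⟩

/-- Conjunctive cumulative transitivity (the Cut rule identity): let
`A, B, C` be events with `P(A ∩ B) > 0`.  Then the conjunction `(C|A∩B) ∧ (B|A)`
coincides pointwise on `Ω` with the conditional event `(B∩C)|A`; in particular its
prevision equals `P(B∩C|A)`. -/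
theorem stmt17 {Ω : Type*} [MeasurableSpace Ω] (P : Measure Ω) [IsProbabilityMeasure P]
    (A B C : Set Ω) (hA : MeasurableSet A) (hB : MeasurableSet B) (hC : MeasurableSet C)
    (hAB : 0 < P (A ∩ B)) :
    (∀ ω : Ω, conj2 P C (A ∩ B) B A ω = condEvent P (B ∩ C) A ω) ∧
      conjPrev P C (A ∩ B) B A = condProb P (B ∩ C) A :=
  stmt17_general P A B C
end

section
/- The Or rule inequality: let A, B, C be events with P(A) > 0 and P(B) > 0. Then the conjunction (C|A) ∧ (C|B) is pointwise less than or equal to the conditional event C|(A∪B), i.e., for every ω ∈ Ω, ((C|A) ∧ (C|B))(ω) ≤ (C|(A∪B))(ω), where C|(A∪B) is the random variable equal to 1 on C∩(A∪B), to 0 on (A∪B)∖C, and to P(C|A∪B) on Aᶜ∩Bᶜ. -/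
/-!
On `A ∪ B` the conjunction `(C|A) ∧ (C|B)` vanishes off `C`, and on `C` it takes the values
`1`, `P(C|A)` or `P(C|B)`, all at most `1`; there `C|(A∪B)` is `0`, resp. `1`. Off `A ∪ B`
both are constant, equal to `z` and `P(C|A∪B)`. Splitting `C∩(A∪B)` into `C∩A∩B`, `Aᶜ∩C∩B`
and `C∩A∩Bᶜ` shows that `z · P(A∪B)` is its measure with the last two pieces weighted by
`P(C|A) ≤ 1` and `P(C|B) ≤ 1`.
-/

open MeasureTheory
open scoped Classical

section

variable {Ω : Type*} [MeasurableSpace Ω]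

theorem condProb_le_one (P : Measure Ω) [IsFiniteMeasure P] (E H : Set Ω) :
    condProb P E H ≤ 1 :=
  div_le_one_of_le₀ (measureReal_mono Set.inter_subset_right) measureReal_nonneg

theorem condEvent_of_mem_inter (P : Measure Ω) {E H : Set Ω} {ω : Ω} (h : ω ∈ E ∩ H) :
    condEvent P E H ω = 1 :=
  if_pos h

theorem condEvent_of_mem_diff (P : Measure Ω) {E H : Set Ω} {ω : Ω} (h : ω ∈ H \ E) :
    condEvent P E H ω = 0 := by
  simp [condEvent, h.2, h]

theorem condEvent_of_notMem (P : Measure Ω) (E : Set Ω) {H : Set Ω} {ω : Ω} (h : ω ∉ H) :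
    condEvent P E H ω = condProb P E H := by
  simp [condEvent, h]

theorem conj2_of_mem_diff_union_diff (P : Measure Ω) {A H B K : Set Ω} {ω : Ω}
    (h : ω ∈ (H \ A) ∪ (K \ B)) : conj2 P A H B K ω = 0 := by
  have h₁ : ω ∉ A ∩ H ∩ (B ∩ K) := by
    rintro ⟨⟨hA, -⟩, hB, -⟩
    rcases h with h | h
    exacts [h.2 hA, h.2 hB]
  simp [conj2, h₁, h]

theorem conj2_of_notMem (P : Measure Ω) (A B : Set Ω) {H K : Set Ω} {ω : Ω}
    (hH : ω ∉ H) (hK : ω ∉ K) : conj2 P A H B K ω = conjPrev P A H B K := by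
  simp [conj2, hH, hK]

theorem conj2_le_one_of_mem_union (P : Measure Ω) [IsFiniteMeasure P] (A B : Set Ω)
    {H K : Set Ω} {ω : Ω} (h : ω ∈ H ∪ K) : conj2 P A H B K ω ≤ 1 := by
  unfold conj2
  split_ifs with h₁ h₂ h₃ h₄
  · exact le_rfl
  · exact zero_le_one
  · exact condProb_le_one P A H
  · exact condProb_le_one P B K
  · exfalso
    simp only [Set.mem_inter_iff, Set.mem_union, Set.mem_sdiff, Set.mem_compl_iff] at h h₁ h₂ h₃ h₄
    tauto

theorem measureReal_inter_union_eq (P : Measure Ω) [IsFiniteMeasure P] {A B : Set Ω}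
    (hA : MeasurableSet A) (hB : MeasurableSet B) (C : Set Ω) :
    P.real (C ∩ (A ∪ B)) =
      P.real (C ∩ A ∩ (C ∩ B)) + P.real (Aᶜ ∩ (C ∩ B)) + P.real (C ∩ A ∩ Bᶜ) := by
  have hcapA : C ∩ (A ∪ B) ∩ A = C ∩ A := by
    ext; simp only [Set.mem_inter_iff, Set.mem_union]; tauto
  have hdiffA : (C ∩ (A ∪ B)) \ A = Aᶜ ∩ (C ∩ B) := by
    ext; simp only [Set.mem_sdiff, Set.mem_inter_iff, Set.mem_union, Set.mem_compl_iff]; tauto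
  have hcapB : C ∩ A ∩ B = C ∩ A ∩ (C ∩ B) := by
    ext; simp only [Set.mem_inter_iff]; tauto
  rw [← measureReal_inter_add_sdiff hA, hcapA, hdiffA, ← measureReal_inter_add_sdiff hB, hcapB,
    Set.sdiff_eq]
  ring

theorem conjPrev_le_condProb_union (P : Measure Ω) [IsFiniteMeasure P] {A B : Set Ω}
    (hA : MeasurableSet A) (hB : MeasurableSet B) (C : Set Ω) :
    conjPrev P C A C B ≤ condProb P C (A ∪ B) := by
  simp only [conjPrev, condProb, ← measureReal_def]
  refine div_le_div_of_nonneg_right ?_ measureReal_nonneg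
  rw [measureReal_inter_union_eq P hA hB C]
  gcongr
  · exact mul_le_of_le_one_left measureReal_nonneg (condProb_le_one P C A)
  · exact mul_le_of_le_one_left measureReal_nonneg (condProb_le_one P C B)

end

theorem stmt18_general {Ω : Type*} [MeasurableSpace Ω] (P : Measure Ω) [IsProbabilityMeasure P]
    (A B C : Set Ω) (hA : MeasurableSet A) (hB : MeasurableSet B) :
    ∀ ω : Ω, conj2 P C A C B ω ≤ condEvent P C (A ∪ B) ω := by
  intro ω
  by_cases hAB : ω ∈ A ∪ B
  · by_cases hC : ω ∈ C
    · rw [condEvent_of_mem_inter P ⟨hC, hAB⟩]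
      exact conj2_le_one_of_mem_union P C C hAB
    · rw [condEvent_of_mem_diff P ⟨hAB, hC⟩,
        conj2_of_mem_diff_union_diff P (hAB.imp (⟨·, hC⟩) (⟨·, hC⟩))]
  · obtain ⟨hωA, hωB⟩ := not_or.mp hAB
    rw [conj2_of_notMem P C C hωA hωB, condEvent_of_notMem P C hAB]
    exact conjPrev_le_condProb_union P hA hB C

/-- The Or rule inequality: let `A, B, C` be events with `P(A) > 0` and
`P(B) > 0`.  Then the conjunction `(C|A) ∧ (C|B)` is pointwise less than or equal to the
conditional event `C|(A∪B)`: for every `ω ∈ Ω`,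
`((C|A) ∧ (C|B))(ω) ≤ (C|(A∪B))(ω)`. -/
theorem stmt18 {Ω : Type*} [MeasurableSpace Ω] (P : Measure Ω) [IsProbabilityMeasure P]
    (A B C : Set Ω) (hA : MeasurableSet A) (hB : MeasurableSet B) (hC : MeasurableSet C)
    (hApos : 0 < P A) (hBpos : 0 < P B) :
    ∀ ω : Ω, conj2 P C A C B ω ≤ condEvent P C (A ∪ B) ω :=
  stmt18_general P A B C hA hB
end
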